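/- arXiv:2602.11859 — 2 statements merged into one kernel-verified Lean document; each statement's English description precedes it below -/
import Mathlib

section
/- Each φ_i maps X_fin into X_fin, and for all s,t ∈ X_fin the limit K_∞(s,t) := lim_{n→∞} K_n(s,t) exists and defines a kernel on X_fin such that: (i) K_∞ is positive definite on X_fin; (ii) (LK_∞)(s,t) = ∑_{i=1}^m K_∞(φ_i(s),φ_i(t)) = K_∞(s,t) for all s,t ∈ X_fin; (iii) K_∞ − K is positive definite on X_fin. -/
/-!
The tower `Kₙ` is increasing in the Loewner order, so for `k ≤ n` the kernel `Kₙ - K_k` is positive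
definite and Cauchy–Schwarz for it gives
`|Kₙ(s,t) - K_k(s,t)|² ≤ (uₙ(s) - u_k(s)) (uₙ(t) - u_k(t))`.
On `X_fin` the diagonals converge, hence `Kₙ(s,t)` is Cauchy. Positive definiteness and the
bound `K ≤ K_∞` pass to the pointwise limit, and `K_∞` is `L`-invariant because
`K_{n+1}(s,t) = ∑ᵢ Kₙ(φᵢ s, φᵢ t)`. Finally `uₙ(φᵢ s) ≤ u_{n+1}(s)` keeps `X_fin` invariant.
-/

open Filter Topology
open scoped BigOperators ComplexOrder ENNReal

/-- A kernel `J : X × X → ℂ` is positive definite: every finite Gram sum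
`∑ conj (c α) * c β * J (s α) (s β)` is a nonnegative real number
(using the partial order on `ℂ`). -/
def IsPD {X : Type*} (J : X → X → ℂ) : Prop :=
  ∀ (r : ℕ) (c : Fin r → ℂ) (p : Fin r → X),
    0 ≤ ∑ α, ∑ β, (starRingEnd ℂ) (c α) * c β * J (p α) (p β)

/-- The pullback operator `(LJ)(s,t) = ∑ i, J (φ i s) (φ i t)`. -/
noncomputable def pullback {X : Type*} (m : ℕ) (φ : Fin m → X → X) (J : X → X → ℂ) :
    X → X → ℂ :=
  fun s t => ∑ i, J (φ i s) (φ i t)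

/-- For a word `w = i₁⋯iₙ ∈ {1,…,m}ⁿ`, `phiW φ w = φ_{iₙ} ∘ ⋯ ∘ φ_{i₁}`. -/
def phiW {X : Type*} {m : ℕ} (φ : Fin m → X → X) : {n : ℕ} → (Fin n → Fin m) → X → X
  | 0, _, x => x
  | n + 1, w, x => φ (w (Fin.last n)) (phiW φ (fun i => w i.castSucc) x)

/-- The tower `K₀ = K`, `K_{n+1} = L Kₙ`. -/
noncomputable def tower {X : Type*} (m : ℕ) (φ : Fin m → X → X) (K : X → X → ℂ) :
    ℕ → X → X → ℂ
  | 0 => K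
  | n + 1 => pullback m φ (tower m φ K n)

/-- The diagonal `uₙ(s) = Kₙ(s,s)` (a real number, as `Kₙ` is p.d.). -/
noncomputable def diag {X : Type*} (m : ℕ) (φ : Fin m → X → X) (K : X → X → ℂ)
    (n : ℕ) (s : X) : ℝ :=
  (tower m φ K n s s).re

/-- The diagonal increment `a_s(w) = u_{|w|+1}(φ_w s) − u_{|w|}(φ_w s)`. -/
noncomputable def incr {X : Type*} (m : ℕ) (φ : Fin m → X → X) (K : X → X → ℂ)
    (s : X) {k : ℕ} (w : Fin k → Fin m) : ℝ :=
  diag m φ K (k + 1) (phiW φ w s) - diag m φ K k (phiW φ w s)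

/-- The finiteness locus `X_fin = {s : u_∞(s) = lim uₙ(s) < ∞}` (the monotone
sequence `uₙ(s)` has a finite limit). -/
def Xfin {X : Type*} (m : ℕ) (φ : Fin m → X → X) (K : X → X → ℂ) : Set X :=
  {s | ∃ l : ℝ, Filter.Tendsto (fun n => diag m φ K n s) Filter.atTop (nhds l)}

/-- Positive definiteness of a kernel restricted to a subset `Y ⊆ X`. -/
def IsPDOn {X : Type*} (Y : Set X) (J : X → X → ℂ) : Prop :=
  ∀ (r : ℕ) (c : Fin r → ℂ) (p : Fin r → X), (∀ α, p α ∈ Y) →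
    0 ≤ ∑ α, ∑ β, (starRingEnd ℂ) (c α) * c β * J (p α) (p β)

open scoped Matrix

/-- Over `ℂ` the Hermitian condition in `Matrix.PosSemidef` is automatic. -/
lemma Matrix.posSemidef_of_forall_star_dotProduct_mulVec_nonneg {n : Type*} [Fintype n]
    [DecidableEq n] {A : Matrix n n ℂ} (h : ∀ x, 0 ≤ star x ⬝ᵥ (A *ᵥ x)) : A.PosSemidef := by
  rw [← Matrix.isPositive_toEuclideanLin_iff, LinearMap.isPositive_iff_complex]
  intro x
  have hx : 0 ≤ inner ℂ (A.toEuclideanLin x) x := by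
    rw [EuclideanSpace.inner_eq_star_dotProduct, Matrix.toLpLin_apply, dotProduct_comm,
      Matrix.star_dotProduct, star_nonneg_iff]
    exact h x.ofLp
  obtain ⟨hre, him⟩ := Complex.nonneg_iff.mp hx
  exact ⟨Complex.ext (by simp) (by simpa using him), hre⟩

section IsPD

variable {X : Type*} {J A B : X → X → ℂ}

lemma IsPD.add (hA : IsPD A) (hB : IsPD B) : IsPD (A + B) := by
  intro r c p
  simpa only [Pi.add_apply, mul_add, Finset.sum_add_distrib] using add_nonneg (hA r c p) (hB r c p)

lemma IsPD.posSemidef_submatrix (hJ : IsPD J) {r : ℕ} (p : Fin r → X) :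
    ((Matrix.of J).submatrix p p).PosSemidef := by
  refine Matrix.posSemidef_of_forall_star_dotProduct_mulVec_nonneg fun c => ?_
  convert hJ r c p using 1
  simp only [dotProduct, Matrix.mulVec, Finset.mul_sum, Pi.star_apply, Complex.star_def,
    Matrix.submatrix_apply, Matrix.of_apply]
  exact Finset.sum_congr rfl fun _ _ => Finset.sum_congr rfl fun _ _ => by ring

lemma IsPD.conj_apply (hJ : IsPD J) (s t : X) : starRingEnd ℂ (J s t) = J t s := by
  simpa using (hJ.posSemidef_submatrix ![s, t]).isHermitian.apply 1 0

lemma IsPD.apply_self_nonneg (hJ : IsPD J) (s : X) : 0 ≤ J s s := by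
  simpa using hJ 1 (fun _ => 1) (fun _ => s)

lemma IsPD.normSq_apply_le (hJ : IsPD J) (s t : X) :
    Complex.normSq (J s t) ≤ (J s s).re * (J t t).re := by
  have hdet := (hJ.posSemidef_submatrix ![s, t]).det_nonneg
  simp only [Matrix.det_fin_two, Matrix.submatrix_apply, Matrix.of_apply, Matrix.cons_val_zero,
    Matrix.cons_val_one, ← hJ.conj_apply s t, Complex.mul_conj] at hdet
  have hs := (Complex.nonneg_iff.mp (hJ.apply_self_nonneg s)).2
  have ht := (Complex.nonneg_iff.mp (hJ.apply_self_nonneg t)).2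
  have := (Complex.nonneg_iff.mp hdet).1
  simp only [Complex.sub_re, Complex.mul_re, ← hs, ← ht, Complex.ofReal_re] at this
  linarith

lemma IsPDOn.of_tendsto {Y : Set X} {F : ℕ → X → X → ℂ} (hF : ∀ n, IsPD (F n))
    (hlim : ∀ s ∈ Y, ∀ t ∈ Y, Tendsto (fun n => F n s t) atTop (𝓝 (J s t))) : IsPDOn Y J :=
  fun r c p hp => ge_of_tendsto' (tendsto_finsetSum _ fun α _ => tendsto_finsetSum _
    fun β _ => (hlim _ (hp α) _ (hp β)).const_mul _) fun n => hF n r c p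

end IsPD

section Tower

variable {X : Type*} {m : ℕ} {φ : Fin m → X → X} {J A B K : X → X → ℂ}

lemma IsPD.pullback (hJ : IsPD J) : IsPD (_root_.pullback m φ J) := by
  intro r c p
  have hsum : ∑ α, ∑ β, starRingEnd ℂ (c α) * c β * _root_.pullback m φ J (p α) (p β)
      = ∑ i, ∑ α, ∑ β, starRingEnd ℂ (c α) * c β * J (φ i (p α)) (φ i (p β)) := by
    simp only [_root_.pullback, Finset.mul_sum]
    exact (Finset.sum_congr rfl fun _ _ => Finset.sum_comm).trans Finset.sum_comm
  rw [hsum]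
  exact Finset.sum_nonneg fun i _ => hJ r c (φ i ∘ p)

lemma pullback_sub : pullback m φ (A - B) = pullback m φ A - pullback m φ B := by
  ext s t
  simp [pullback]

lemma isPD_tower (hK : IsPD K) : ∀ n, IsPD (tower m φ K n)
  | 0 => hK
  | n + 1 => (isPD_tower hK n).pullback

lemma isPD_tower_succ_sub (hsub : IsPD (pullback m φ K - K)) :
    ∀ n, IsPD (tower m φ K (n + 1) - tower m φ K n)
  | 0 => hsub
  | n + 1 => pullback_sub (φ := φ) ▸ (isPD_tower_succ_sub hsub n).pullback

lemma isPD_tower_sub_of_le (hsub : IsPD (pullback m φ K - K)) {k n : ℕ} (h : k ≤ n) :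
    IsPD (tower m φ K n - tower m φ K k) := by
  induction n, h using Nat.le_induction with
  | base => intro r c p; simp
  | succ n _ ih => simpa using (isPD_tower_succ_sub hsub n).add ih

lemma diag_succ (n : ℕ) (s : X) : diag m φ K (n + 1) s = ∑ i, diag m φ K n (φ i s) := by
  simp [diag, tower, pullback, Complex.re_sum]

lemma diag_nonneg (hK : IsPD K) (n : ℕ) (s : X) : 0 ≤ diag m φ K n s :=
  (Complex.nonneg_iff.mp ((isPD_tower hK n).apply_self_nonneg s)).1

lemma diag_sub_diag (k n : ℕ) (s : X) :
    diag m φ K n s - diag m φ K k s = (tower m φ K n s s - tower m φ K k s s).re := by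
  simp [diag]

lemma monotone_diag (hsub : IsPD (pullback m φ K - K)) (s : X) :
    Monotone fun n => diag m φ K n s := by
  refine monotone_nat_of_le_succ fun n => sub_nonneg.mp ?_
  rw [diag_sub_diag]
  exact (Complex.nonneg_iff.mp ((isPD_tower_succ_sub hsub n).apply_self_nonneg s)).1

lemma mapsTo_Xfin (hK : IsPD K) (hsub : IsPD (pullback m φ K - K)) (i : Fin m) :
    Set.MapsTo (φ i) (Xfin m φ K) (Xfin m φ K) := by
  rintro s ⟨l, hl⟩
  have hbound : ∀ n, diag m φ K n (φ i s) ≤ l := fun n => calc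
    diag m φ K n (φ i s) ≤ ∑ j, diag m φ K n (φ j s) :=
      Finset.single_le_sum (fun j _ => diag_nonneg hK n (φ j s)) (Finset.mem_univ i)
    _ = diag m φ K (n + 1) s := (diag_succ n s).symm
    _ ≤ l := (monotone_diag hsub s).ge_of_tendsto hl (n + 1)
  exact ⟨_, tendsto_atTop_ciSup (monotone_diag hsub (φ i s)) ⟨l, by simpa [upperBounds]⟩⟩

lemma normSq_tower_sub_le (hsub : IsPD (pullback m φ K - K)) {k n : ℕ} (h : k ≤ n) (s t : X) :
    Complex.normSq (tower m φ K n s t - tower m φ K k s t)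
      ≤ (diag m φ K n s - diag m φ K k s) * (diag m φ K n t - diag m φ K k t) := by
  simpa only [diag_sub_diag, Pi.sub_apply] using (isPD_tower_sub_of_le hsub h).normSq_apply_le s t

end Tower

lemma cauchySeq_of_dist_sq_le_mul {E : Type*} [PseudoMetricSpace E] {f : ℕ → E} {a b : ℕ → ℝ}
    (ha : CauchySeq a) (hb : CauchySeq b)
    (h : ∀ k n, k ≤ n → dist (f n) (f k) ^ 2 ≤ (a n - a k) * (b n - b k)) : CauchySeq f := by
  have hdist : ∀ k n, k ≤ n → dist (f n) (f k) ≤ dist (a n) (a k) + dist (b n) (b k) := by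
    intro k n hkn
    have hprod : (a n - a k) * (b n - b k) ≤ (dist (a n) (a k) + dist (b n) (b k)) ^ 2 := by
      rw [Real.dist_eq, Real.dist_eq]
      calc _ ≤ |a n - a k| * |b n - b k| := (le_abs_self _).trans (abs_mul _ _).le
        _ ≤ _ := by nlinarith [abs_nonneg (a n - a k), abs_nonneg (b n - b k)]
    exact (pow_le_pow_iff_left₀ dist_nonneg (by positivity) two_ne_zero).mp
      ((h k n hkn).trans hprod)
  rw [Metric.cauchySeq_iff] at ha hb
  rw [Metric.cauchySeq_iff']
  intro ε hε
  obtain ⟨N₁, hN₁⟩ := ha (ε / 2) (half_pos hε)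
  obtain ⟨N₂, hN₂⟩ := hb (ε / 2) (half_pos hε)
  refine ⟨max N₁ N₂, fun n hn => ?_⟩
  have := hN₁ n (le_of_max_le_left hn) _ (le_max_left N₁ N₂)
  have := hN₂ n (le_of_max_le_right hn) _ (le_max_right N₁ N₂)
  linarith [hdist _ n hn]

theorem stmt7_general {X : Type*} (m : ℕ) (φ : Fin m → X → X)
    (K : X → X → ℂ) (hK : IsPD K)
    (hsub : IsPD (fun s t => pullback m φ K s t - K s t)) :
    (∀ i : Fin m, ∀ s ∈ Xfin m φ K, φ i s ∈ Xfin m φ K) ∧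
    ∃ Kinf : X → X → ℂ,
      (∀ s ∈ Xfin m φ K, ∀ t ∈ Xfin m φ K,
        Tendsto (fun n => tower m φ K n s t) atTop (𝓝 (Kinf s t))) ∧
      IsPDOn (Xfin m φ K) Kinf ∧
      (∀ s ∈ Xfin m φ K, ∀ t ∈ Xfin m φ K,
        ∑ i : Fin m, Kinf (φ i s) (φ i t) = Kinf s t) ∧
      IsPDOn (Xfin m φ K) (fun s t => Kinf s t - K s t) := by
  have hmaps : ∀ i, Set.MapsTo (φ i) (Xfin m φ K) (Xfin m φ K) := mapsTo_Xfin hK hsub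
  set Kinf : X → X → ℂ := fun s t => limUnder atTop fun n => tower m φ K n s t
  have hlim : ∀ s ∈ Xfin m φ K, ∀ t ∈ Xfin m φ K,
      Tendsto (fun n => tower m φ K n s t) atTop (𝓝 (Kinf s t)) := by
    rintro s ⟨a, ha⟩ t ⟨b, hb⟩
    refine CauchySeq.tendsto_limUnder (cauchySeq_of_dist_sq_le_mul ha.cauchySeq hb.cauchySeq
      fun k n hkn => ?_)
    rw [dist_eq_norm, ← Complex.normSq_eq_norm_sq]
    exact normSq_tower_sub_le hsub hkn s t
  refine ⟨hmaps, Kinf, hlim, IsPDOn.of_tendsto (isPD_tower hK) hlim, ?_, ?_⟩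
  · intro s hs t ht
    exact tendsto_nhds_unique (tendsto_finsetSum _ fun i _ => hlim _ (hmaps i hs) _ (hmaps i ht))
      ((hlim s hs t ht).comp (tendsto_add_atTop_nat 1))
  · exact IsPDOn.of_tendsto (fun n => isPD_tower_sub_of_le hsub n.zero_le)
      fun s hs t ht => (hlim s hs t ht).sub_const (K s t)

/-- Invariant completion: each `φᵢ` maps `X_fin` into itself, and the pointwise limit
`K_∞` exists on `X_fin × X_fin`, is positive definite there, satisfies `L K_∞ = K_∞`
on `X_fin`, and majorizes `K` on `X_fin`. -/
theorem stmt7 {X : Type*} (m : ℕ) (hm : 1 ≤ m) (φ : Fin m → X → X)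
    (K : X → X → ℂ) (hK : IsPD K)
    (hsub : IsPD (fun s t => pullback m φ K s t - K s t)) :
    (∀ i : Fin m, ∀ s ∈ Xfin m φ K, φ i s ∈ Xfin m φ K) ∧
    ∃ Kinf : X → X → ℂ,
      (∀ s ∈ Xfin m φ K, ∀ t ∈ Xfin m φ K,
        Tendsto (fun n => tower m φ K n s t) atTop (𝓝 (Kinf s t))) ∧
      IsPDOn (Xfin m φ K) Kinf ∧
      (∀ s ∈ Xfin m φ K, ∀ t ∈ Xfin m φ K,
        ∑ i : Fin m, Kinf (φ i s) (φ i t) = Kinf s t) ∧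
      IsPDOn (Xfin m φ K) (fun s t => Kinf s t - K s t) :=
  stmt7_general m φ K hK hsub
end

section
/- Fix s ∈ Y and Γ ≥ 1, and suppose that for every n ≥ 0, max_{w∈W_n} u(φ_w(s)) ≤ Γ · min_{w∈W_n} u(φ_w(s)). Then B(s) := sup_{n≥0} m^n ∑_{w∈W_n} u(φ_w(s))² ≤ Γ · u(s)². -/
open MeasureTheory Filter Topology
open scoped BigOperators ComplexOrder ENNReal

/-- The sampled process `Mₙ(s,t;ω) = mⁿ J(φ_{ω|n}(s), φ_{ω|n}(t))`. -/
noncomputable def Mart {X : Type*} (m : ℕ) (φ : Fin m → X → X) (J : X → X → ℂ)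
    (s t : X) (n : ℕ) (ω : ℕ → Fin m) : ℂ :=
  (m : ℂ) ^ n *
    J (phiW φ (fun i : Fin n => ω (i : ℕ)) s) (phiW φ (fun i : Fin n => ω (i : ℕ)) t)

/-- The σ-algebra `Fₙ` on `Ω = {1,…,m}^ℕ` generated by the first `n` coordinates. -/
def Filt (m n : ℕ) : MeasurableSpace (ℕ → Fin m) :=
  MeasurableSpace.comap (fun ω => (fun i : Fin n => ω (i : ℕ))) inferInstance

/-!
Positive definiteness makes the diagonal values `u(φ_w s)` nonnegative, and iterating `LJ = J`
shows that on every level they sum to `u(s)`. Each square `u_w²` is at most `Γ u_v u_w` for every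
word `v` of the same length; summing over the `mⁿ` choices of `v` gives
`mⁿ ∑_w u_w² ≤ Γ (∑_w u_w)² = Γ u(s)²`.
-/

theorem IsPDOn.diag_nonneg {X : Type*} {Y : Set X} {J : X → X → ℂ} (hJ : IsPDOn Y J)
    {x : X} (hx : x ∈ Y) : 0 ≤ J x x := by
  simpa using hJ 1 (fun _ => 1) (fun _ => x) fun _ => hx

section phiW

variable {X : Type*} {m : ℕ} {φ : Fin m → X → X}

theorem phiW_snoc {n : ℕ} (w : Fin n → Fin m) (i : Fin m) (x : X) :
    phiW φ (Fin.snoc w i : Fin (n + 1) → Fin m) x = φ i (phiW φ w x) := by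
  simp [phiW]

theorem phiW_mem {Y : Set X} (hY : ∀ i, ∀ x ∈ Y, φ i x ∈ Y) {x : X} (hx : x ∈ Y) :
    ∀ {n : ℕ} (w : Fin n → Fin m), phiW φ w x ∈ Y
  | 0, _ => hx
  | _ + 1, _ => hY _ _ (phiW_mem hY hx _)

theorem sum_phiW_eq_of_pullback_eq {Y : Set X} (hY : ∀ i, ∀ x ∈ Y, φ i x ∈ Y)
    {J : X → X → ℂ} (hJ : ∀ s ∈ Y, ∀ t ∈ Y, ∑ i, J (φ i s) (φ i t) = J s t)
    {s t : X} (hs : s ∈ Y) (ht : t ∈ Y) :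
    ∀ n : ℕ, ∑ w : Fin n → Fin m, J (phiW φ w s) (phiW φ w t) = J s t
  | 0 => by simp [phiW]
  | n + 1 => by
    rw [← (Fin.snocEquiv fun _ => Fin m).sum_comp, Fintype.sum_prod_type_right]
    simp only [Fin.snocEquiv, Equiv.coe_fn_mk, phiW_snoc,
      hJ _ (phiW_mem hY hs _) _ (phiW_mem hY ht _)]
    exact sum_phiW_eq_of_pullback_eq hY hJ hs ht n

end phiW

theorem card_mul_sum_sq_le_mul_sq_sum {ι : Type*} [Fintype ι] {f : ι → ℝ} {Γ : ℝ}
    (hf : ∀ i, 0 ≤ f i) (hΓ : ∀ i j, f i ≤ Γ * f j) :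
    Fintype.card ι * ∑ i, f i ^ 2 ≤ Γ * (∑ i, f i) ^ 2 :=
  calc (Fintype.card ι : ℝ) * ∑ i, f i ^ 2 = ∑ _j : ι, ∑ i, f i ^ 2 := by simp
    _ ≤ ∑ j, ∑ i, Γ * f j * f i := by
      gcongr with j _ i _
      rw [sq]
      exact mul_le_mul_of_nonneg_right (hΓ i j) (hf i)
    _ = Γ * (∑ i, f i) ^ 2 := by
      simp_rw [← Finset.mul_sum, ← Finset.sum_mul]
      rw [← Finset.mul_sum]
      ring

theorem stmt13_general {X : Type*} (m : ℕ) (φ : Fin m → X → X)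
    (Y : Set X) (hY : ∀ i : Fin m, ∀ x ∈ Y, φ i x ∈ Y)
    (J : X → X → ℂ) (hJpd : IsPDOn Y J)
    (hJinv : ∀ s ∈ Y, ∀ t ∈ Y, ∑ i : Fin m, J (φ i s) (φ i t) = J s t)
    (s : X) (hs : s ∈ Y) (Γ : ℝ)
    (hcomp : ∀ n : ℕ, ∀ w v : Fin n → Fin m,
      (J (phiW φ w s) (phiW φ w s)).re ≤ Γ * (J (phiW φ v s) (phiW φ v s)).re) :
    ∀ n : ℕ,
      (m : ℝ) ^ n * ∑ w : Fin n → Fin m, ((J (phiW φ w s) (phiW φ w s)).re) ^ 2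
        ≤ Γ * ((J s s).re) ^ 2 := by
  intro n
  have hnonneg (w : Fin n → Fin m) : 0 ≤ (J (phiW φ w s) (phiW φ w s)).re :=
    (Complex.nonneg_iff.mp (hJpd.diag_nonneg (phiW_mem hY hs w))).1
  have hsum : ∑ w : Fin n → Fin m, (J (phiW φ w s) (phiW φ w s)).re = (J s s).re := by
    rw [← Complex.re_sum, sum_phiW_eq_of_pullback_eq hY hJinv hs hs n]
  simpa [Fintype.card_fun, hsum] using card_mul_sum_sq_le_mul_sq_sum hnonneg (hcomp n)

/-- Level comparability of the diagonal values along the `φ`-tree rooted at `s`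
(`max_w u(φ_w s) ≤ Γ min_w u(φ_w s)` at every level) implies
`B(s) = sup_n mⁿ ∑_{w∈W_n} u(φ_w s)² ≤ Γ u(s)²`. -/
theorem stmt13 {X : Type*} (m : ℕ) (hm : 1 ≤ m) (φ : Fin m → X → X)
    (Y : Set X) (hY : ∀ i : Fin m, ∀ x ∈ Y, φ i x ∈ Y)
    (J : X → X → ℂ) (hJpd : IsPDOn Y J)
    (hJinv : ∀ s ∈ Y, ∀ t ∈ Y, ∑ i : Fin m, J (φ i s) (φ i t) = J s t)
    (s : X) (hs : s ∈ Y) (Γ : ℝ) (hΓ : 1 ≤ Γ)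
    (hcomp : ∀ n : ℕ, ∀ w v : Fin n → Fin m,
      (J (phiW φ w s) (phiW φ w s)).re ≤ Γ * (J (phiW φ v s) (phiW φ v s)).re) :
    ∀ n : ℕ,
      (m : ℝ) ^ n * ∑ w : Fin n → Fin m, ((J (phiW φ w s) (phiW φ w s)).re) ^ 2
        ≤ Γ * ((J s s).re) ^ 2 :=
  stmt13_general m φ Y hY J hJpd hJinv s hs Γ hcomp
end
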